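/- Suppose x_{m+1} = A_m x_m admits a general dichotomy with bounds (a_{m,n}) and (b_{m,n}), the f_m are Lipschitz with f_m(0)=0, α < +∞, β < +∞, and 2α + max{2β, √β} < 1. Then there exists a unique φ ∈ 𝒳 such that φ_n(ξ) = − Σ_{k=n}^{∞} (𝒜_{k+1,n}|_{F_n})^{−1} Q_{k+1} f_k(x^φ_{n,k}(ξ) + φ_k(x^φ_{n,k}(ξ))) for every n ∈ ℕ and every ξ ∈ E_n. -/

import Mathlib

/-- `calA A m n` is the linear evolution operator
`𝒜_{m,n} = A_{m-1} ∘ ⋯ ∘ A_n` (and the identity if `m ≤ n`). -/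
def calA {X : Type*} [NormedAddCommGroup X] [NormedSpace ℝ X]
    (A : ℕ → X →L[ℝ] X) : ℕ → ℕ → X →L[ℝ] X
  | 0, _ => ContinuousLinearMap.id ℝ X
  | m + 1, n => if m + 1 ≤ n then ContinuousLinearMap.id ℝ X else (A m).comp (calA A m n)

/-!
Extend each `φ_k : E_k → F_k` to all of `X` as `φ_k ∘ P_k`. The equation then says that `φ` is a
fixed point of the Lyapunov–Perron operator
`T(φ)_n(ξ) = -∑_{k ≥ n} (𝒜_{k+1,n}|_{F_n})⁻¹ Q_{k+1} f_k(x^φ_{n,k}(ξ) + φ_k(x^φ_{n,k}(ξ)))`.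
Since `2α < 1`, a discrete Gronwall argument bounds `‖x^φ_{n,m}(ξ) - x^ψ_{n,m}(ξ')‖` by
`(1 - 2α)⁻¹ (‖ξ - ξ'‖ + α d) a_{m,n}`, where `d a_{k,n}` bounds `‖φ_k - ψ_k‖` along the orbit
of `ψ`. Summing against the `b`-bounds, `T` maps `𝒳` into itself because `2β ≤ 1 - 2α`, and it
contracts the weighted distance `sup ‖φ_n(ξ) - ψ_n(ξ)‖ / ‖ξ‖` by the factor `β (1 - 2α)⁻² < 1`;
this is where `√β < 1 - 2α` enters. The Picard iterates of `T` converge pointwise, and their limit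
is the unique fixed point in `𝒳`.
-/

open Filter Topology Finset

theorem eq_of_forall_norm_sub_le_mul_pow {E : Type*} [NormedAddCommGroup E] {x y : E} {c θ : ℝ}
    (hθ0 : 0 ≤ θ) (hθ1 : θ < 1) (h : ∀ k : ℕ, ‖x - y‖ ≤ c * θ ^ k) : x = y := by
  have hlim : Tendsto (fun k : ℕ => c * θ ^ k) atTop (𝓝 0) := by
    simpa using (tendsto_pow_atTop_nhds_zero_of_lt_one hθ0 hθ1).const_mul c
  exact sub_eq_zero.mp (norm_le_zero_iff.mp (ge_of_tendsto' hlim h))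

section WeightedContraction

variable {ι E : Type*} [NormedAddCommGroup E] {S : Set (ι → E)} {T : (ι → E) → ι → E}
  {w : ι → ℝ} {θ : ℝ}

theorem norm_iterate_sub_le (hTS : Set.MapsTo T S S)
    (hT : ∀ φ ∈ S, ∀ ψ ∈ S, ∀ δ, 0 ≤ δ → (∀ i, ‖φ i - ψ i‖ ≤ δ * w i) →
      ∀ i, ‖T φ i - T ψ i‖ ≤ θ * δ * w i)
    (hθ0 : 0 ≤ θ) {φ ψ : ι → E} (hφ : φ ∈ S) (hψ : ψ ∈ S) {δ : ℝ} (hδ : 0 ≤ δ)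
    (hφψ : ∀ i, ‖φ i - ψ i‖ ≤ δ * w i) (k : ℕ) (i : ι) :
    ‖T^[k] φ i - T^[k] ψ i‖ ≤ θ ^ k * δ * w i := by
  induction k generalizing i with
  | zero => simpa using hφψ i
  | succ k ih =>
    rw [Function.iterate_succ_apply', Function.iterate_succ_apply', pow_succ']
    simpa only [mul_assoc] using hT _ (hTS.iterate k hφ) _ (hTS.iterate k hψ) _
      (mul_nonneg (pow_nonneg hθ0 k) hδ) ih i

theorem existsUnique_fixedPoint_of_weighted_contraction [CompleteSpace E]
    (hθ0 : 0 ≤ θ) (hθ1 : θ < 1) (hS : S.Nonempty) (hTS : Set.MapsTo T S S)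
    (hS_lim : ∀ (u : ℕ → ι → E) (g : ι → E), (∀ j, u j ∈ S) →
      (∀ i, Tendsto (u · i) atTop (𝓝 (g i))) → g ∈ S)
    (hS_bdd : ∀ φ ∈ S, ∀ ψ ∈ S, ∃ δ, 0 ≤ δ ∧ ∀ i, ‖φ i - ψ i‖ ≤ δ * w i)
    (hT : ∀ φ ∈ S, ∀ ψ ∈ S, ∀ δ, 0 ≤ δ → (∀ i, ‖φ i - ψ i‖ ≤ δ * w i) →
      ∀ i, ‖T φ i - T ψ i‖ ≤ θ * δ * w i) :
    ∃! φ, φ ∈ S ∧ T φ = φ := by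
  obtain ⟨φ₀, hφ₀⟩ := hS
  obtain ⟨δ₀, hδ₀, hTφ₀⟩ := hS_bdd _ (hTS hφ₀) _ hφ₀
  set u : ℕ → ι → E := fun j => T^[j] φ₀
  have hu : ∀ j, u j ∈ S := fun j => hTS.iterate j hφ₀
  have hstep : ∀ i j, dist (u j i) (u (j + 1) i) ≤ δ₀ * w i * θ ^ j := fun i j => by
    rw [dist_comm, dist_eq_norm, mul_right_comm, mul_comm _ (θ ^ j)]
    simpa only [u, Function.iterate_succ_apply] using
      norm_iterate_sub_le hTS hT hθ0 (hTS hφ₀) hφ₀ hδ₀ hTφ₀ j i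
  choose g hg using fun i =>
    cauchySeq_tendsto_of_complete (cauchySeq_of_le_geometric θ _ hθ1 (hstep i))
  have htail : ∀ j i, ‖g i - u j i‖ ≤ δ₀ * θ ^ j / (1 - θ) * w i := fun j i => by
    rw [← dist_eq_norm, dist_comm, div_mul_eq_mul_div, mul_right_comm]
    exact dist_le_of_le_geometric_of_tendsto θ _ hθ1 (hstep i) (hg i) j
  have hgS : g ∈ S := hS_lim u g hu hg
  have hTg : T g = g := funext fun i => by
    refine eq_of_forall_norm_sub_le_mul_pow (c := 2 * θ * δ₀ * w i / (1 - θ)) hθ0 hθ1 fun j => ?_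
    have h1θ : 0 < 1 - θ := by linarith
    have hTu := hT _ hgS _ (hu j) _ (by positivity) (htail j) i
    rw [← Function.iterate_succ_apply' T j φ₀] at hTu
    calc ‖T g i - g i‖ ≤ ‖T g i - u (j + 1) i‖ + ‖u (j + 1) i - g i‖ :=
          norm_sub_le_norm_sub_add_norm_sub _ _ _
      _ ≤ θ * (δ₀ * θ ^ j / (1 - θ)) * w i + δ₀ * θ ^ (j + 1) / (1 - θ) * w i :=
          add_le_add hTu ((norm_sub_rev _ _).trans_le (htail (j + 1) i))
      _ = 2 * θ * δ₀ * w i / (1 - θ) * θ ^ j := by field_simp; ring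
  refine ⟨g, ⟨hgS, hTg⟩, fun ψ ⟨hψS, hTψ⟩ => funext fun i => ?_⟩
  obtain ⟨δ, hδ, hψg⟩ := hS_bdd _ hψS _ hgS
  refine eq_of_forall_norm_sub_le_mul_pow (c := δ * w i) hθ0 hθ1 fun k => ?_
  have h := norm_iterate_sub_le hTS hT hθ0 hψS hgS hδ hψg k i
  rwa [Function.iterate_fixed hTψ, Function.iterate_fixed hTg, mul_assoc, mul_comm] at h

end WeightedContraction

theorem le_mul_of_le_add_sum {a : ℕ → ℕ → ℝ} {L u : ℕ → ℝ} {α c d : ℝ} {n : ℕ}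
    (ha : ∀ m k, k ≤ m → 0 ≤ a m k) (hL : ∀ k, 0 ≤ L k)
    (hα : ∀ m, n ≤ m → ∑ k ∈ Ico n m, a m (k + 1) * (a k n * L k) ≤ α * a m n)
    (hα1 : 2 * α < 1) (hc : 0 ≤ c) (hd : 0 ≤ d)
    (hu : ∀ m, n ≤ m →
      u m ≤ c * a m n + ∑ k ∈ Ico n m, a m (k + 1) * (L k * (2 * u k + d * a k n))) :
    ∀ m, n ≤ m → u m ≤ (1 - 2 * α)⁻¹ * (c + α * d) * a m n := by
  set M := (1 - 2 * α)⁻¹ * (c + α * d)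
  have hM0 : 0 ≤ 2 * M + d := by
    have hM : 2 * M + d = (1 - 2 * α)⁻¹ * (2 * c + d) := by
      simp only [M]; field_simp [(sub_pos.mpr hα1).ne']; ring
    exact hM ▸ mul_nonneg (inv_nonneg.mpr (by linarith)) (by positivity)
  intro m
  induction m using Nat.strong_induction_on with
  | _ m ih =>
    intro hm
    have hterm : ∀ k ∈ Ico n m, a m (k + 1) * (L k * (2 * u k + d * a k n)) ≤
        (2 * M + d) * (a m (k + 1) * (a k n * L k)) := fun k hk => by
      obtain ⟨hnk, hkm⟩ := mem_Ico.mp hk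
      have := ha m (k + 1) hkm
      have := hL k
      calc _ ≤ a m (k + 1) * (L k * (2 * (M * a k n) + d * a k n)) := by
            gcongr; exact ih k hkm hnk
        _ = _ := by ring
    calc u m ≤ c * a m n + ∑ k ∈ Ico n m, a m (k + 1) * (L k * (2 * u k + d * a k n)) := hu m hm
      _ ≤ c * a m n + (2 * M + d) * (α * a m n) := by
          gcongr
          calc _ ≤ ∑ k ∈ Ico n m, (2 * M + d) * (a m (k + 1) * (a k n * L k)) := sum_le_sum hterm
            _ ≤ (2 * M + d) * (α * a m n) := by
                rw [← mul_sum]; exact mul_le_mul_of_nonneg_left (hα m hm) hM0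
      _ = M * a m n := by simp only [M]; field_simp [(sub_pos.mpr hα1).ne']; ring

theorem sum_le_mul_of_mem_upperBounds {a : ℕ → ℕ → ℝ} {L : ℕ → ℝ} {α : ℝ}
    (ha : ∀ m n, n ≤ m → 0 < a m n) (hL : ∀ k, 0 ≤ L k)
    (hα : α ∈ upperBounds {r : ℝ | ∃ m n : ℕ, n < m ∧
      r = (∑ k ∈ Ico n m, a m (k + 1) * (a k n * L k)) / a m n}) :
    ∀ m n, n ≤ m → ∑ k ∈ Ico n m, a m (k + 1) * (a k n * L k) ≤ α * a m n := by
  intro m n hnm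
  rcases hnm.eq_or_lt with rfl | hlt
  · have hα0 : 0 ≤ α := by
      refine le_trans ?_ (hα ⟨1, 0, zero_lt_one, rfl⟩)
      have := ha 1 1 le_rfl; have := ha 0 0 le_rfl; have := ha 1 0 zero_le_one; have := hL 0
      simp only [Nat.Ico_succ_singleton, sum_singleton]
      positivity
    simpa using mul_nonneg hα0 (ha n n le_rfl).le
  · exact (div_le_iff₀ (ha m n hnm)).mp (hα ⟨m, n, hlt, rfl⟩)

theorem smallness_of_add_max_lt {α β : ℝ} (h : 2 * α + max (2 * β) (Real.sqrt β) < 1) :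
    2 * α < 1 ∧ 2 * β * (1 - 2 * α)⁻¹ ≤ 1 ∧ β * (1 - 2 * α)⁻¹ ^ 2 < 1 := by
  have h2β := le_max_left (2 * β) (Real.sqrt β)
  have hsqrt := le_max_right (2 * β) (Real.sqrt β)
  have hpos : 0 < 1 - 2 * α := by linarith [Real.sqrt_nonneg β]
  refine ⟨by linarith, ?_, ?_⟩
  · rw [← div_eq_mul_inv, div_le_one hpos]; linarith
  · rw [inv_pow, ← div_eq_mul_inv, div_lt_one (by positivity)]
    exact (Real.sqrt_lt' hpos).mp (by linarith)

section Dichotomy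

variable {X : Type*} [NormedAddCommGroup X]

structure IsLipschitzPerturbation (f : ℕ → X → X) (L : ℕ → ℝ) : Prop where
  nonneg : ∀ k, 0 ≤ L k
  map_zero : ∀ k, f k 0 = 0
  norm_sub_le : ∀ k u v, ‖f k u - f k v‖ ≤ L k * ‖u - v‖

variable [NormedSpace ℝ X]

/-- `B m n` stands for `(𝒜_{m,n}|_{F_n})⁻¹ Q_m`. -/
structure IsDichotomy (A P : ℕ → X →L[ℝ] X) (B : ℕ → ℕ → X →L[ℝ] X) (a b : ℕ → ℕ → ℝ) :
    Prop where
  a_pos : ∀ m n, n ≤ m → 0 < a m n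
  proj_comp_self : ∀ n, (P n).comp (P n) = P n
  proj_comp_calA : ∀ m n, n ≤ m → (P m).comp (calA A m n) = (calA A m n).comp (P n)
  proj_B_apply : ∀ m n, n ≤ m → ∀ x, P n (B m n x) = 0
  norm_calA_comp_proj_le : ∀ m n, n ≤ m → ‖(calA A m n).comp (P n)‖ ≤ a m n
  norm_B_le : ∀ m n, n ≤ m → ‖B m n‖ ≤ b m n

/-- `φ ∈ 𝒳`, with `φ_k` extended to `X` as `φ_k ∘ P_k`. -/
structure IsAdmissible (P : ℕ → X →L[ℝ] X) (φ : ℕ → X → X) : Prop where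
  map_zero : ∀ k, φ k 0 = 0
  norm_sub_le : ∀ k x y, ‖φ k x - φ k y‖ ≤ ‖P k x - P k y‖
  proj_apply : ∀ k x, P k (φ k x) = 0

/-- `orbit A P f φ n ξ m` is `x^φ_{n,m}(ξ)`. -/
noncomputable def orbit (A P : ℕ → X →L[ℝ] X) (f φ : ℕ → X → X) (n : ℕ) (ξ : X) : ℕ → X
  | m => calA A m n ξ + ∑ k ∈ (Ico n m).attach,
      calA A m (k.1 + 1) (P (k.1 + 1)
        (f k.1 (orbit A P f φ n ξ k.1 + φ k.1 (orbit A P f φ n ξ k.1))))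
  termination_by m => m
  decreasing_by exact (mem_Ico.mp k.2).2

noncomputable def lyapunovPerronTerm (A P : ℕ → X →L[ℝ] X) (B : ℕ → ℕ → X →L[ℝ] X) (f φ : ℕ → X → X)
    (n : ℕ) (ξ : X) (j : ℕ) : X :=
  B (n + j + 1) n (f (n + j) (orbit A P f φ n ξ (n + j) + φ (n + j) (orbit A P f φ n ξ (n + j))))

noncomputable def lyapunovPerronMap (A P : ℕ → X →L[ℝ] X) (B : ℕ → ℕ → X →L[ℝ] X)
    (f φ : ℕ → X → X) (n : ℕ) (x : X) : X :=
  -∑' j, lyapunovPerronTerm A P B f φ n (P n x) j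

/-- The property of `φ` asserted by the theorem. -/
def IsSolution (A P : ℕ → X →L[ℝ] X) (B : ℕ → ℕ → X →L[ℝ] X) (a : ℕ → ℕ → ℝ) (f : ℕ → X → X)
    (φ : ∀ n : ℕ, LinearMap.range (P n : X →ₗ[ℝ] X) → LinearMap.ker (P n : X →ₗ[ℝ] X)) :
    Prop :=
  ((∀ n, φ n 0 = 0) ∧
    ∀ (n : ℕ) (ξ ξ' : LinearMap.range (P n : X →ₗ[ℝ] X)),
      ‖(φ n ξ : X) - (φ n ξ' : X)‖ ≤ ‖(ξ : X) - (ξ' : X)‖) ∧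
  ∀ (n : ℕ) (x : ∀ m : ℕ, LinearMap.range (P n : X →ₗ[ℝ] X) → LinearMap.range (P m : X →ₗ[ℝ] X)),
    ((∀ m : ℕ, n ≤ m → x m 0 = 0) ∧
      (∃ C : ℝ, ∀ m : ℕ, n ≤ m → ∀ ξ : LinearMap.range (P n : X →ₗ[ℝ] X),
        ‖(x m ξ : X)‖ ≤ C * (a m n * ‖(ξ : X)‖)) ∧
      (∀ m : ℕ, n ≤ m → ∀ ξ : LinearMap.range (P n : X →ₗ[ℝ] X),
        (x m ξ : X) = calA A m n (ξ : X) +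
          ∑ k ∈ Finset.Ico n m,
            calA A m (k + 1) (P (k + 1) (f k ((x k ξ : X) + (φ k (x k ξ) : X)))))) →
    ∀ ξ : LinearMap.range (P n : X →ₗ[ℝ] X),
      HasSum
        (fun j : ℕ => B (n + j + 1) n (f (n + j)
          ((x (n + j) ξ : X) + (φ (n + j) (x (n + j) ξ) : X))))
        (-(φ n ξ : X))

variable {A P : ℕ → X →L[ℝ] X} {B : ℕ → ℕ → X →L[ℝ] X} {a b : ℕ → ℕ → ℝ}
  {f φ ψ : ℕ → X → X} {L : ℕ → ℝ}

def IsAdmissible.restrict (hφ : IsAdmissible P φ) (n : ℕ) :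
    LinearMap.range (P n : X →ₗ[ℝ] X) → LinearMap.ker (P n : X →ₗ[ℝ] X) :=
  fun ξ => ⟨φ n ξ, LinearMap.mem_ker.mpr (hφ.proj_apply n ξ)⟩

def extendByProj
    (ψ : ∀ n : ℕ, LinearMap.range (P n : X →ₗ[ℝ] X) → LinearMap.ker (P n : X →ₗ[ℝ] X))
    (n : ℕ) (x : X) : X :=
  ψ n ⟨P n x, LinearMap.mem_range_self _ x⟩

namespace IsDichotomy

theorem proj_proj_apply (hD : IsDichotomy A P B a b) (n : ℕ) (x : X) : P n (P n x) = P n x :=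
  congrArg (· x) (hD.proj_comp_self n)

theorem proj_coe (hD : IsDichotomy A P B a b) {n : ℕ}
    (ξ : LinearMap.range (P n : X →ₗ[ℝ] X)) : P n ξ = ξ := by
  obtain ⟨_, y, rfl⟩ := ξ
  exact hD.proj_proj_apply n y

theorem proj_calA_apply (hD : IsDichotomy A P B a b) {m n : ℕ} (h : n ≤ m) (x : X) :
    P m (calA A m n x) = calA A m n (P n x) :=
  congrArg (· x) (hD.proj_comp_calA m n h)

theorem norm_calA_proj_apply_le (hD : IsDichotomy A P B a b) {m n : ℕ} (h : n ≤ m) (x : X) :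
    ‖calA A m n (P n x)‖ ≤ a m n * ‖x‖ :=
  ((calA A m n).comp (P n)).le_opNorm x |>.trans <|
    mul_le_mul_of_nonneg_right (hD.norm_calA_comp_proj_le m n h) (norm_nonneg x)

theorem norm_B_apply_le (hD : IsDichotomy A P B a b) {m n : ℕ} (h : n ≤ m) (x : X) :
    ‖B m n x‖ ≤ b m n * ‖x‖ :=
  (B m n).le_opNorm x |>.trans <| mul_le_mul_of_nonneg_right (hD.norm_B_le m n h) (norm_nonneg x)

theorem b_nonneg (hD : IsDichotomy A P B a b) {m n : ℕ} (h : n ≤ m) : 0 ≤ b m n :=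
  (norm_nonneg _).trans (hD.norm_B_le m n h)

end IsDichotomy

theorem extendByProj_coe (hD : IsDichotomy A P B a b)
    (ψ : ∀ n : ℕ, LinearMap.range (P n : X →ₗ[ℝ] X) → LinearMap.ker (P n : X →ₗ[ℝ] X)) {n : ℕ}
    (ξ : LinearMap.range (P n : X →ₗ[ℝ] X)) : extendByProj ψ n ξ = ψ n ξ := by
  simp only [extendByProj, hD.proj_coe ξ]

theorem eq_restrict_of_extendByProj_eq (hD : IsDichotomy A P B a b)
    {ψ : ∀ n : ℕ, LinearMap.range (P n : X →ₗ[ℝ] X) → LinearMap.ker (P n : X →ₗ[ℝ] X)}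
    (hφ : IsAdmissible P φ) (hψφ : extendByProj ψ = φ) : ψ = hφ.restrict :=
  funext fun n => funext fun ξ => Subtype.ext <| by
    rw [← extendByProj_coe hD ψ ξ, hψφ]; rfl

theorem IsSolution.isAdmissible_extendByProj
    {ψ : ∀ n : ℕ, LinearMap.range (P n : X →ₗ[ℝ] X) → LinearMap.ker (P n : X →ₗ[ℝ] X)}
    (hψ : IsSolution A P B a f ψ) : IsAdmissible P (extendByProj ψ) where
  map_zero k := by simp only [extendByProj, map_zero]; exact congrArg Subtype.val (hψ.1.1 k)
  norm_sub_le k _ _ := hψ.1.2 k _ _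
  proj_apply k _ := LinearMap.mem_ker.mp (ψ k _).2

theorem IsAdmissible.norm_le (hφ : IsAdmissible P φ) (k : ℕ) (x : X) : ‖φ k x‖ ≤ ‖P k x‖ := by
  simpa [hφ.map_zero] using hφ.norm_sub_le k x 0

theorem IsAdmissible.norm_sub_le_two_mul (hφ : IsAdmissible P φ) (hψ : IsAdmissible P ψ)
    (k : ℕ) (x : X) : ‖φ k x - ψ k x‖ ≤ 2 * ‖P k x‖ :=
  (_root_.norm_sub_le _ _).trans (by linarith [hφ.norm_le k x, hψ.norm_le k x])

theorem isAdmissible_zero : IsAdmissible P 0 where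
  map_zero _ := rfl
  norm_sub_le _ _ _ := by simp
  proj_apply _ _ := map_zero _

theorem IsAdmissible.of_tendsto {u : ℕ → ℕ → X → X} {g : ℕ → X → X}
    (hu : ∀ j, IsAdmissible P (u j)) (hg : ∀ k x, Tendsto (u · k x) atTop (𝓝 (g k x))) :
    IsAdmissible P g where
  map_zero k := tendsto_nhds_unique (hg k 0) (by simp only [(hu _).map_zero, tendsto_const_nhds])
  norm_sub_le k x y :=
    le_of_tendsto' ((hg k x).sub (hg k y)).norm fun j => (hu j).norm_sub_le k x y
  proj_apply k x := tendsto_nhds_unique (((P k).continuous.tendsto _).comp (hg k x))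
    (by simp only [Function.comp_def, (hu _).proj_apply, tendsto_const_nhds])

theorem IsAdmissible.norm_graph_sub_le (hφ : IsAdmissible P φ) (ψ : ℕ → X → X) {k : ℕ}
    {x y : X} (hx : P k x = x) (hy : P k y = y) :
    ‖(x + φ k x) - (y + ψ k y)‖ ≤ 2 * ‖x - y‖ + ‖φ k y - ψ k y‖ := by
  have hφxy : ‖φ k x - φ k y‖ ≤ ‖x - y‖ := by simpa only [hx, hy] using hφ.norm_sub_le k x y
  calc ‖(x + φ k x) - (y + ψ k y)‖ = ‖(x - y) + (φ k x - φ k y) + (φ k y - ψ k y)‖ := by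
        congr 1; abel
    _ ≤ ‖x - y‖ + ‖φ k x - φ k y‖ + ‖φ k y - ψ k y‖ := norm_add₃_le
    _ ≤ 2 * ‖x - y‖ + ‖φ k y - ψ k y‖ := by linarith

theorem orbit_eq (n : ℕ) (ξ : X) (m : ℕ) :
    orbit A P f φ n ξ m = calA A m n ξ + ∑ k ∈ Ico n m,
      calA A m (k + 1) (P (k + 1) (f k (orbit A P f φ n ξ k + φ k (orbit A P f φ n ξ k)))) := by
  rw [orbit, sum_attach (Ico n m) fun k =>
    calA A m (k + 1) (P (k + 1) (f k (orbit A P f φ n ξ k + φ k (orbit A P f φ n ξ k))))]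

theorem eq_orbit_of_forall_eq {n : ℕ} {ξ : X} {x : ℕ → X}
    (hx : ∀ m, n ≤ m → x m = calA A m n ξ + ∑ k ∈ Ico n m,
      calA A m (k + 1) (P (k + 1) (f k (x k + φ k (x k))))) :
    ∀ m, n ≤ m → x m = orbit A P f φ n ξ m := by
  intro m
  induction m using Nat.strong_induction_on with
  | _ m ih =>
    intro hm
    rw [hx m hm, orbit_eq]
    refine congrArg _ (sum_congr rfl fun k hk => ?_)
    rw [ih k (mem_Ico.mp hk).2 (mem_Ico.mp hk).1]

theorem orbit_zero (hf : IsLipschitzPerturbation f L) (hφ : ∀ k, φ k 0 = 0) (n m : ℕ) :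
    orbit A P f φ n 0 m = 0 := by
  induction m using Nat.strong_induction_on with
  | _ m ih =>
    rw [orbit_eq, map_zero, zero_add]
    refine sum_eq_zero fun k hk => ?_
    rw [ih k (mem_Ico.mp hk).2, hφ, add_zero, hf.map_zero, map_zero, map_zero]

theorem proj_orbit (hD : IsDichotomy A P B a b) {n : ℕ} {ξ : X} (hξ : P n ξ = ξ) {m : ℕ}
    (hm : n ≤ m) : P m (orbit A P f φ n ξ m) = orbit A P f φ n ξ m := by
  rw [orbit_eq, map_add, map_sum, hD.proj_calA_apply hm, hξ]
  refine congrArg _ (sum_congr rfl fun k hk => ?_)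
  rw [hD.proj_calA_apply (mem_Ico.mp hk).2, hD.proj_proj_apply]

section Estimates

variable {α β : ℝ} (hD : IsDichotomy A P B a b) (hf : IsLipschitzPerturbation f L)
  (hα : ∀ m n, n ≤ m → ∑ k ∈ Ico n m, a m (k + 1) * (a k n * L k) ≤ α * a m n)
  (hα1 : 2 * α < 1)
include hD hf hα hα1

theorem norm_orbit_sub_orbit_le (hφ : IsAdmissible P φ) {n : ℕ} {ξ ξ' : X} (hξ : P n ξ = ξ)
    (hξ' : P n ξ' = ξ') {d : ℝ} (hd : 0 ≤ d)
    (hφψ : ∀ k, n ≤ k →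
      ‖φ k (orbit A P f ψ n ξ' k) - ψ k (orbit A P f ψ n ξ' k)‖ ≤ d * a k n) :
    ∀ m, n ≤ m → ‖orbit A P f φ n ξ m - orbit A P f ψ n ξ' m‖ ≤
      (1 - 2 * α)⁻¹ * (‖ξ - ξ'‖ + α * d) * a m n := by
  set y := orbit A P f φ n ξ
  set y' := orbit A P f ψ n ξ'
  refine le_mul_of_le_add_sum (fun m k h => (hD.a_pos m k h).le) hf.nonneg (hα · n) hα1
    (norm_nonneg _) hd fun m hm => ?_
  have hdiff : y m - y' m = calA A m n (P n (ξ - ξ')) + ∑ k ∈ Ico n m,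
      calA A m (k + 1) (P (k + 1) (f k (y k + φ k (y k)) - f k (y' k + ψ k (y' k)))) := by
    simp only [y, y', map_sub, hξ, hξ', sum_sub_distrib]
    rw [orbit_eq, orbit_eq (φ := ψ)]
    abel
  have hterm : ∀ k ∈ Ico n m,
      ‖calA A m (k + 1) (P (k + 1) (f k (y k + φ k (y k)) - f k (y' k + ψ k (y' k))))‖ ≤
        a m (k + 1) * (L k * (2 * ‖y k - y' k‖ + d * a k n)) := fun k hk => by
    obtain ⟨hnk, hkm⟩ := mem_Ico.mp hk
    calc _ ≤ a m (k + 1) * ‖f k (y k + φ k (y k)) - f k (y' k + ψ k (y' k))‖ :=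
          hD.norm_calA_proj_apply_le hkm _
      _ ≤ a m (k + 1) * (L k * ‖(y k + φ k (y k)) - (y' k + ψ k (y' k))‖) := by
          gcongr
          · exact (hD.a_pos _ _ hkm).le
          · exact hf.norm_sub_le _ _ _
      _ ≤ a m (k + 1) * (L k * (2 * ‖y k - y' k‖ + d * a k n)) := by
          have := hD.a_pos _ _ hkm
          have := hf.nonneg k
          gcongr
          refine (hφ.norm_graph_sub_le ψ (proj_orbit hD hξ hnk) (proj_orbit hD hξ' hnk)).trans ?_
          gcongr
          exact hφψ k hnk
  rw [hdiff]
  calc _ ≤ ‖calA A m n (P n (ξ - ξ'))‖ + ∑ k ∈ Ico n m,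
        ‖calA A m (k + 1) (P (k + 1) (f k (y k + φ k (y k)) - f k (y' k + ψ k (y' k))))‖ :=
        (norm_add_le _ _).trans (by gcongr; exact norm_sum_le _ _)
    _ ≤ _ := by
        rw [mul_comm ‖ξ - ξ'‖]
        exact add_le_add (hD.norm_calA_proj_apply_le hm _) (sum_le_sum hterm)

theorem norm_orbit_le (hφ : IsAdmissible P φ) {n : ℕ} {ξ : X} (hξ : P n ξ = ξ) {m : ℕ}
    (hm : n ≤ m) : ‖orbit A P f φ n ξ m‖ ≤ (1 - 2 * α)⁻¹ * ‖ξ‖ * a m n := by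
  simpa [orbit_zero hf hφ.map_zero] using norm_orbit_sub_orbit_le hD hf hα hα1 hφ (ψ := φ)
    hξ (map_zero _) le_rfl (fun k _ => by simp) m hm

theorem norm_graph_orbit_sub_le (hφ : IsAdmissible P φ) (hψ : IsAdmissible P ψ) {δ : ℝ}
    (hδ : 0 ≤ δ) (hφψ : ∀ k x, ‖φ k x - ψ k x‖ ≤ δ * ‖P k x‖) {n : ℕ} {ξ ξ' : X}
    (hξ : P n ξ = ξ) (hξ' : P n ξ' = ξ') {k : ℕ} (hk : n ≤ k) :
    ‖(orbit A P f φ n ξ k + φ k (orbit A P f φ n ξ k)) -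
        (orbit A P f ψ n ξ' k + ψ k (orbit A P f ψ n ξ' k))‖ ≤
      (1 - 2 * α)⁻¹ * (2 * ‖ξ - ξ'‖ + (1 - 2 * α)⁻¹ * δ * ‖ξ'‖) * a k n := by
  set d := δ * ((1 - 2 * α)⁻¹ * ‖ξ'‖)
  have hC : 0 ≤ (1 - 2 * α)⁻¹ := inv_nonneg.mpr (by linarith)
  have hφψ' : ∀ j, n ≤ j →
      ‖φ j (orbit A P f ψ n ξ' j) - ψ j (orbit A P f ψ n ξ' j)‖ ≤ d * a j n := fun j hj => by
    calc _ ≤ δ * ‖orbit A P f ψ n ξ' j‖ := by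
          simpa only [proj_orbit hD hξ' hj] using hφψ j (orbit A P f ψ n ξ' j)
      _ ≤ d * a j n := by
          rw [mul_assoc]
          exact mul_le_mul_of_nonneg_left (norm_orbit_le hD hf hα hα1 hψ hξ' hj) hδ
  have horbit := norm_orbit_sub_orbit_le hD hf hα hα1 hφ hξ hξ' (by positivity) hφψ' k hk
  calc _ ≤ 2 * ‖orbit A P f φ n ξ k - orbit A P f ψ n ξ' k‖ + d * a k n :=
        (hφ.norm_graph_sub_le ψ (proj_orbit hD hξ hk) (proj_orbit hD hξ' hk)).trans
          (add_le_add_right (hφψ' k hk) _)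
    _ ≤ 2 * ((1 - 2 * α)⁻¹ * (‖ξ - ξ'‖ + α * d) * a k n) + d * a k n := by gcongr
    _ = _ := by simp only [d]; field_simp [(sub_pos.mpr hα1).ne']; ring

theorem norm_lyapunovPerronTerm_sub_le (hφ : IsAdmissible P φ) (hψ : IsAdmissible P ψ) {δ : ℝ}
    (hδ : 0 ≤ δ) (hφψ : ∀ k x, ‖φ k x - ψ k x‖ ≤ δ * ‖P k x‖) {n : ℕ} {ξ ξ' : X}
    (hξ : P n ξ = ξ) (hξ' : P n ξ' = ξ') (j : ℕ) :
    ‖lyapunovPerronTerm A P B f φ n ξ j - lyapunovPerronTerm A P B f ψ n ξ' j‖ ≤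
      b (n + j + 1) n * (a (n + j) n * L (n + j)) *
        ((1 - 2 * α)⁻¹ * (2 * ‖ξ - ξ'‖ + (1 - 2 * α)⁻¹ * δ * ‖ξ'‖)) := by
  have hb := hD.b_nonneg (m := n + j + 1) (n := n) (by omega)
  have hgraph := norm_graph_orbit_sub_le hD hf hα hα1 hφ hψ hδ hφψ hξ hξ' (Nat.le_add_right n j)
  calc _ ≤ b (n + j + 1) n * ‖f (n + j) (orbit A P f φ n ξ (n + j) +
          φ (n + j) (orbit A P f φ n ξ (n + j))) - f (n + j) (orbit A P f ψ n ξ' (n + j) +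
          ψ (n + j) (orbit A P f ψ n ξ' (n + j)))‖ := by
        rw [lyapunovPerronTerm, lyapunovPerronTerm, ← map_sub]
        exact hD.norm_B_apply_le (by omega) _
    _ ≤ b (n + j + 1) n * (L (n + j) * ((1 - 2 * α)⁻¹ *
          (2 * ‖ξ - ξ'‖ + (1 - 2 * α)⁻¹ * δ * ‖ξ'‖) * a (n + j) n)) := by
        gcongr
        exact (hf.norm_sub_le _ _ _).trans (mul_le_mul_of_nonneg_left hgraph (hf.nonneg _))
    _ = _ := by ring

theorem summable_lyapunovPerronTerm [CompleteSpace X]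
    (hsum : ∀ n, Summable fun j => b (n + j + 1) n * (a (n + j) n * L (n + j)))
    (hφ : IsAdmissible P φ) {n : ℕ} {ξ : X} (hξ : P n ξ = ξ) :
    Summable (lyapunovPerronTerm A P B f φ n ξ) := by
  refine ((hsum n).mul_right ((1 - 2 * α)⁻¹ * (2 * ‖ξ‖))).of_norm_bounded fun j => ?_
  simpa [lyapunovPerronTerm, orbit_zero hf hφ.map_zero, hφ.map_zero, hf.map_zero] using
    norm_lyapunovPerronTerm_sub_le hD hf hα hα1 hφ hφ le_rfl (fun k x => by simp) hξ (map_zero _) j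

theorem norm_lyapunovPerronMap_sub_le [CompleteSpace X]
    (hsum : ∀ n, Summable fun j => b (n + j + 1) n * (a (n + j) n * L (n + j)))
    (hβ : ∀ n, ∑' j, b (n + j + 1) n * (a (n + j) n * L (n + j)) ≤ β)
    (hφ : IsAdmissible P φ) (hψ : IsAdmissible P ψ) {δ : ℝ}
    (hδ : 0 ≤ δ) (hφψ : ∀ k x, ‖φ k x - ψ k x‖ ≤ δ * ‖P k x‖) (n : ℕ) (x x' : X) :
    ‖lyapunovPerronMap A P B f φ n x - lyapunovPerronMap A P B f ψ n x'‖ ≤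
      β * ((1 - 2 * α)⁻¹ * (2 * ‖P n x - P n x'‖ + (1 - 2 * α)⁻¹ * δ * ‖P n x'‖)) := by
  set K := (1 - 2 * α)⁻¹ * (2 * ‖P n x - P n x'‖ + (1 - 2 * α)⁻¹ * δ * ‖P n x'‖)
  have hK : 0 ≤ K := by
    have : 0 ≤ (1 - 2 * α)⁻¹ := inv_nonneg.mpr (by linarith)
    positivity
  have hφs := summable_lyapunovPerronTerm hD hf hα hα1 hsum hφ (hD.proj_proj_apply n x)
  have hψs := summable_lyapunovPerronTerm hD hf hα hα1 hsum hψ (hD.proj_proj_apply n x')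
  rw [lyapunovPerronMap, lyapunovPerronMap, neg_sub_neg, ← hψs.tsum_sub hφs]
  refine (tsum_of_norm_bounded ((hsum n).mul_right K).hasSum fun j => ?_).trans ?_
  · rw [norm_sub_rev]
    exact norm_lyapunovPerronTerm_sub_le hD hf hα hα1 hφ hψ hδ hφψ (hD.proj_proj_apply n x)
      (hD.proj_proj_apply n x') j
  · rw [tsum_mul_right]
    exact mul_le_mul_of_nonneg_right (hβ n) hK

theorem norm_lyapunovPerronMap_sub_le_of_eq [CompleteSpace X]
    (hsum : ∀ n, Summable fun j => b (n + j + 1) n * (a (n + j) n * L (n + j)))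
    (hβ : ∀ n, ∑' j, b (n + j + 1) n * (a (n + j) n * L (n + j)) ≤ β)
    (hφ : IsAdmissible P φ) (hψ : IsAdmissible P ψ) {δ : ℝ}
    (hδ : 0 ≤ δ) (hφψ : ∀ k x, ‖φ k x - ψ k x‖ ≤ δ * ‖P k x‖) (n : ℕ) (x : X) :
    ‖lyapunovPerronMap A P B f φ n x - lyapunovPerronMap A P B f ψ n x‖ ≤
      β * (1 - 2 * α)⁻¹ ^ 2 * δ * ‖P n x‖ := by
  have h := norm_lyapunovPerronMap_sub_le hD hf hα hα1 hsum hβ hφ hψ hδ hφψ n x x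
  rw [sub_self, norm_zero, mul_zero, zero_add] at h
  exact h.trans_eq (by ring)

theorem isAdmissible_lyapunovPerronMap [CompleteSpace X]
    (hsum : ∀ n, Summable fun j => b (n + j + 1) n * (a (n + j) n * L (n + j)))
    (hβ : ∀ n, ∑' j, b (n + j + 1) n * (a (n + j) n * L (n + j)) ≤ β)
    (hβα : 2 * β * (1 - 2 * α)⁻¹ ≤ 1) (hφ : IsAdmissible P φ) :
    IsAdmissible P (lyapunovPerronMap A P B f φ) where
  map_zero n := by
    simp [lyapunovPerronMap, lyapunovPerronTerm, orbit_zero hf hφ.map_zero, hφ.map_zero,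
      hf.map_zero]
  norm_sub_le n x y := by
    have h := norm_lyapunovPerronMap_sub_le hD hf hα hα1 hsum hβ hφ hφ le_rfl
      (fun k x => by simp) n x y
    calc _ ≤ 2 * β * (1 - 2 * α)⁻¹ * ‖P n x - P n y‖ := by simpa [mul_assoc, mul_left_comm] using h
      _ ≤ ‖P n x - P n y‖ := mul_le_of_le_one_left (norm_nonneg _) hβα
  proj_apply n x := by
    rw [lyapunovPerronMap, map_neg, (P n).map_tsum (summable_lyapunovPerronTerm hD hf hα hα1 hsum hφ
      (hD.proj_proj_apply n x)), neg_eq_zero]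
    exact (tsum_congr fun j => hD.proj_B_apply _ _ (by omega) _).trans tsum_zero

theorem existsUnique_isAdmissible_fixedPoint [CompleteSpace X]
    (hsum : ∀ n, Summable fun j => b (n + j + 1) n * (a (n + j) n * L (n + j)))
    (hβ : ∀ n, ∑' j, b (n + j + 1) n * (a (n + j) n * L (n + j)) ≤ β)
    (hβα : 2 * β * (1 - 2 * α)⁻¹ ≤ 1) (hθ : β * (1 - 2 * α)⁻¹ ^ 2 < 1) :
    ∃! φ, IsAdmissible P φ ∧ lyapunovPerronMap A P B f φ = φ := by
  have hβ0 : 0 ≤ β := (tsum_nonneg fun j => mul_nonneg (hD.b_nonneg (by omega))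
    (mul_nonneg (hD.a_pos _ _ (by omega)).le (hf.nonneg _))).trans (hβ 0)
  obtain ⟨u, ⟨hu, hTu⟩, huniq⟩ :=
    existsUnique_fixedPoint_of_weighted_contraction
      (S := {u : ℕ × X → X | IsAdmissible P (Function.curry u)})
      (T := fun u => Function.uncurry (lyapunovPerronMap A P B f (Function.curry u)))
      (w := fun p => ‖P p.1 p.2‖) (by positivity) hθ ⟨0, isAdmissible_zero⟩
      (fun u hu => by
        simpa using isAdmissible_lyapunovPerronMap hD hf hα hα1 hsum hβ hβα hu)
      (fun u g hu hg => IsAdmissible.of_tendsto hu fun k x => hg (k, x))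
      (fun φ hφ ψ hψ => ⟨2, zero_le_two, fun p => hφ.norm_sub_le_two_mul hψ p.1 p.2⟩)
      (fun φ hφ ψ hψ δ hδ hφψ p => norm_lyapunovPerronMap_sub_le_of_eq hD hf hα hα1 hsum hβ hφ hψ
        hδ (fun k x => hφψ (k, x)) p.1 p.2)
  refine ⟨Function.curry u, ⟨hu, ?_⟩, fun φ ⟨hφ, hTφ⟩ => ?_⟩
  · simpa using congrArg Function.curry hTu
  · rw [← huniq (Function.uncurry φ) ⟨by simpa using hφ, by simp [hTφ]⟩, Function.curry_uncurry]

theorem isSolution_restrict [CompleteSpace X]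
    (hsum : ∀ n, Summable fun j => b (n + j + 1) n * (a (n + j) n * L (n + j)))
    (hφ : IsAdmissible P φ) (hTφ : lyapunovPerronMap A P B f φ = φ) :
    IsSolution A P B a f hφ.restrict := by
  refine ⟨⟨fun n => Subtype.ext (hφ.map_zero n), fun n ξ ξ' => ?_⟩, ?_⟩
  · simpa only [IsAdmissible.restrict, hD.proj_coe] using hφ.norm_sub_le n ξ ξ'
  rintro n x ⟨-, -, hx⟩ ξ
  have hxo := eq_orbit_of_forall_eq (φ := φ) (x := fun m => (x m ξ : X)) fun m hm => hx m hm ξ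
  have hfix : ∑' j, lyapunovPerronTerm A P B f φ n ξ j = -(φ n ξ) := by
    rw [← congrFun (congrFun hTφ n) ξ, lyapunovPerronMap, hD.proj_coe, neg_neg]
  have hterm : (fun j => B (n + j + 1) n (f (n + j)
      ((x (n + j) ξ : X) + (hφ.restrict (n + j) (x (n + j) ξ) : X)))) =
        lyapunovPerronTerm A P B f φ n ξ := funext fun j => by
    simp only [lyapunovPerronTerm, IsAdmissible.restrict, hxo _ (Nat.le_add_right n j)]
  rw [hterm, IsAdmissible.restrict, ← hfix]
  exact (summable_lyapunovPerronTerm hD hf hα hα1 hsum hφ (hD.proj_coe ξ)).hasSum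

theorem IsSolution.lyapunovPerronMap_extendByProj
    {ψ : ∀ n : ℕ, LinearMap.range (P n : X →ₗ[ℝ] X) → LinearMap.ker (P n : X →ₗ[ℝ] X)}
    (hψ : IsSolution A P B a f ψ) :
    lyapunovPerronMap A P B f (extendByProj ψ) = extendByProj ψ := by
  funext n y
  have hψ' := hψ.isAdmissible_extendByProj
  -- Projecting by `P m` puts `x m ζ` in `E_m` for every `m`, not only for `m ≥ n`.
  set x : ∀ m, LinearMap.range (P n : X →ₗ[ℝ] X) → LinearMap.range (P m : X →ₗ[ℝ] X) :=
    fun m ζ => ⟨P m (orbit A P f (extendByProj ψ) n ζ m), LinearMap.mem_range_self _ _⟩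
  have hxo : ∀ m, n ≤ m → ∀ ζ, (x m ζ : X) = orbit A P f (extendByProj ψ) n ζ m :=
    fun m hm ζ => proj_orbit hD (hD.proj_coe ζ) hm
  have hx0 : ∀ m, n ≤ m → x m 0 = 0 := fun m _ => Subtype.ext <| by
    simp only [x, ZeroMemClass.coe_zero, orbit_zero hf hψ'.map_zero, map_zero]
  have hx_growth : ∀ m, n ≤ m → ∀ ζ, ‖(x m ζ : X)‖ ≤ (1 - 2 * α)⁻¹ * (a m n * ‖(ζ : X)‖) :=
    fun m hm ζ => by
      rw [hxo m hm ζ]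
      exact (norm_orbit_le hD hf hα hα1 hψ' (hD.proj_coe ζ) hm).trans_eq (by ring)
  have hx_eq : ∀ m, n ≤ m → ∀ ζ, (x m ζ : X) = calA A m n ζ + ∑ k ∈ Ico n m,
      calA A m (k + 1) (P (k + 1) (f k ((x k ζ : X) + (ψ k (x k ζ) : X)))) := fun m hm ζ => by
    rw [hxo m hm ζ, orbit_eq]
    refine congrArg _ (sum_congr rfl fun k hk => ?_)
    rw [hxo k (mem_Ico.mp hk).1 ζ]
    rfl
  set ξ : LinearMap.range (P n : X →ₗ[ℝ] X) := ⟨P n y, LinearMap.mem_range_self _ y⟩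
  have hs := hψ.2 n x ⟨hx0, ⟨_, hx_growth⟩, hx_eq⟩ ξ
  have hterm : (fun j => B (n + j + 1) n (f (n + j) ((x (n + j) ξ : X) +
      (ψ (n + j) (x (n + j) ξ) : X)))) = lyapunovPerronTerm A P B f (extendByProj ψ) n ξ :=
    funext fun j => by rw [hxo _ (Nat.le_add_right n j)]; rfl
  rw [hterm] at hs
  show -∑' j, lyapunovPerronTerm A P B f (extendByProj ψ) n ξ j = (ψ n ξ : X)
  rw [hs.tsum_eq, neg_neg]

end Estimates

end Dichotomy

theorem exists_unique_phi_general
    {X : Type*} [NormedAddCommGroup X] [NormedSpace ℝ X] [CompleteSpace X]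
    (A P : ℕ → X →L[ℝ] X) (B : ℕ → ℕ → X →L[ℝ] X) (a b : ℕ → ℕ → ℝ)
    -- the bounds are positive
    (ha : ∀ m n : ℕ, n ≤ m → 0 < a m n)
    -- the `P n` are bounded projections
    (hproj : ∀ n, (P n).comp (P n) = P n)
    -- (S1) : `P m ∘ 𝒜_{m,n} = 𝒜_{m,n} ∘ P n`
    (hS1 : ∀ m n : ℕ, n ≤ m → (P m).comp (calA A m n) = (calA A m n).comp (P n))
    (hBF : ∀ m n : ℕ, n ≤ m → ∀ x : X, P n (B m n x) = 0)
    -- (D1) : `‖𝒜_{m,n} P n‖ ≤ a m n`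
    (hD1 : ∀ m n : ℕ, n ≤ m → ‖(calA A m n).comp (P n)‖ ≤ a m n)
    -- (D2) : `‖(𝒜_{m,n}|_{F n})⁻¹ Q m‖ ≤ b m n`
    (hD2 : ∀ m n : ℕ, n ≤ m → ‖B m n‖ ≤ b m n)
    -- the perturbations `f k` vanish at `0` and are Lipschitz with constant `L k`
    (f : ℕ → X → X) (L : ℕ → ℝ) (hL0 : ∀ k, 0 ≤ L k) (hf0 : ∀ k, f k 0 = 0)
    (hLip : ∀ (k : ℕ) (u v : X), ‖f k u - f k v‖ ≤ L k * ‖u - v‖)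
    -- `α = sup_{m>n} (1/a_{m,n}) ∑_{k=n}^{m-1} a_{m,k+1} a_{k,n} Lip(f k) < ∞`
    (α : ℝ)
    (hα : IsLUB {r : ℝ | ∃ m n : ℕ, n < m ∧
      r = (∑ k ∈ Finset.Ico n m, a m (k + 1) * (a k n * L k)) / a m n} α)
    -- `β = sup_n ∑_{k=n}^{∞} b_{k+1,n} a_{k,n} Lip(f k) < ∞`
    (β : ℝ)
    (hsum : ∀ n : ℕ, Summable fun j : ℕ => b (n + j + 1) n * (a (n + j) n * L (n + j)))
    (hβ : IsLUB {r : ℝ | ∃ n : ℕ,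
      r = ∑' j : ℕ, b (n + j + 1) n * (a (n + j) n * L (n + j))} β)
    -- `2α + max {2β, √β} < 1`
    (hcond : 2 * α + max (2 * β) (Real.sqrt β) < 1)
    :
    ∃ φ : ∀ n : ℕ, LinearMap.range (P n : X →ₗ[ℝ] X) → LinearMap.ker (P n : X →ₗ[ℝ] X),
      (((∀ n, φ n 0 = 0) ∧
      ∀ (n : ℕ) (ξ ξ' : LinearMap.range (P n : X →ₗ[ℝ] X)),
        ‖(φ n ξ : X) - (φ n ξ' : X)‖ ≤ ‖(ξ : X) - (ξ' : X)‖) ∧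
      (∀ (n : ℕ) (x : ∀ m : ℕ, LinearMap.range (P n : X →ₗ[ℝ] X) → LinearMap.range (P m : X →ₗ[ℝ] X)),
        ((∀ m : ℕ, n ≤ m → x m 0 = 0) ∧
          (∃ C : ℝ, ∀ m : ℕ, n ≤ m → ∀ ξ : LinearMap.range (P n : X →ₗ[ℝ] X),
            ‖(x m ξ : X)‖ ≤ C * (a m n * ‖(ξ : X)‖)) ∧
          (∀ m : ℕ, n ≤ m → ∀ ξ : LinearMap.range (P n : X →ₗ[ℝ] X),
            (x m ξ : X) = calA A m n (ξ : X) +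
              ∑ k ∈ Finset.Ico n m,
                calA A m (k + 1) (P (k + 1) (f k ((x k ξ : X) + (φ k (x k ξ) : X)))))) →
        ∀ ξ : LinearMap.range (P n : X →ₗ[ℝ] X),
          HasSum
            (fun j : ℕ => B (n + j + 1) n (f (n + j)
          ((x (n + j) ξ : X) + (φ (n + j) (x (n + j) ξ) : X))))
            (-(φ n ξ : X)))) ∧
      (∀ ψ : ∀ n : ℕ, LinearMap.range (P n : X →ₗ[ℝ] X) → LinearMap.ker (P n : X →ₗ[ℝ] X),
        (((∀ n, ψ n 0 = 0) ∧
      ∀ (n : ℕ) (ξ ξ' : LinearMap.range (P n : X →ₗ[ℝ] X)),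
        ‖(ψ n ξ : X) - (ψ n ξ' : X)‖ ≤ ‖(ξ : X) - (ξ' : X)‖) ∧
        (∀ (n : ℕ) (x : ∀ m : ℕ, LinearMap.range (P n : X →ₗ[ℝ] X) → LinearMap.range (P m : X →ₗ[ℝ] X)),
        ((∀ m : ℕ, n ≤ m → x m 0 = 0) ∧
          (∃ C : ℝ, ∀ m : ℕ, n ≤ m → ∀ ξ : LinearMap.range (P n : X →ₗ[ℝ] X),
            ‖(x m ξ : X)‖ ≤ C * (a m n * ‖(ξ : X)‖)) ∧
          (∀ m : ℕ, n ≤ m → ∀ ξ : LinearMap.range (P n : X →ₗ[ℝ] X),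
            (x m ξ : X) = calA A m n (ξ : X) +
              ∑ k ∈ Finset.Ico n m,
                calA A m (k + 1) (P (k + 1) (f k ((x k ξ : X) + (ψ k (x k ξ) : X)))))) →
        ∀ ξ : LinearMap.range (P n : X →ₗ[ℝ] X),
          HasSum
            (fun j : ℕ => B (n + j + 1) n (f (n + j)
          ((x (n + j) ξ : X) + (ψ (n + j) (x (n + j) ξ) : X))))
            (-(ψ n ξ : X)))) → ψ = φ) := by
  have hD : IsDichotomy A P B a b := ⟨ha, hproj, hS1, hBF, hD1, hD2⟩
  have hf : IsLipschitzPerturbation f L := ⟨hL0, hf0, hLip⟩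
  have hα' := sum_le_mul_of_mem_upperBounds ha hL0 hα.1
  obtain ⟨hα1, hβα, hθ⟩ := smallness_of_add_max_lt hcond
  obtain ⟨φ, ⟨hφ, hTφ⟩, hφ_unique⟩ := existsUnique_isAdmissible_fixedPoint hD hf hα' hα1 hsum
    (fun n => hβ.1 ⟨n, rfl⟩) hβα hθ
  refine ⟨hφ.restrict, isSolution_restrict hD hf hα' hα1 hsum hφ hTφ, fun ψ (hψ : IsSolution A P B a f ψ) => ?_⟩
  exact eq_restrict_of_extendByProj_eq hD hφ
    (hφ_unique _ ⟨hψ.isAdmissible_extendByProj, hψ.lyapunovPerronMap_extendByProj hD hf hα' hα1⟩)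

/-- Lemma 3.3 : existence and uniqueness of `φ ∈ 𝒳` satisfying
`φ n ξ = - ∑_{k=n}^{∞} (𝒜_{k+1,n}|_{F n})⁻¹ Q_{k+1} f k (x^φ_{n,k} ξ + φ_k(x^φ_{n,k} ξ))`. -/
theorem exists_unique_phi
    {X : Type*} [NormedAddCommGroup X] [NormedSpace ℝ X] [CompleteSpace X]
    (A P : ℕ → X →L[ℝ] X) (B : ℕ → ℕ → X →L[ℝ] X) (a b : ℕ → ℕ → ℝ)
    -- the bounds are positive
    (ha : ∀ m n : ℕ, n ≤ m → 0 < a m n) (hb : ∀ m n : ℕ, n ≤ m → 0 < b m n)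
    -- the `P n` are bounded projections
    (hproj : ∀ n, (P n).comp (P n) = P n)
    -- (S1) : `P m ∘ 𝒜_{m,n} = 𝒜_{m,n} ∘ P n`
    (hS1 : ∀ m n : ℕ, n ≤ m → (P m).comp (calA A m n) = (calA A m n).comp (P n))
    -- (S2)/(S3) : `B m n` is the operator `(𝒜_{m,n}|_{F n})⁻¹ ∘ Q m`, where `Q m = Id - P m`;
    -- its existence encodes that `𝒜_{m,n}` maps `F n = ker (P n)` bijectively onto `F m`
    (hB1 : ∀ m n : ℕ, n ≤ m → ∀ x : X, calA A m n (B m n x) = x - P m x)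
    (hB2 : ∀ m n : ℕ, n ≤ m → ∀ x : X, B m n (calA A m n x) = x - P n x)
    (hBF : ∀ m n : ℕ, n ≤ m → ∀ x : X, P n (B m n x) = 0)
    -- (D1) : `‖𝒜_{m,n} P n‖ ≤ a m n`
    (hD1 : ∀ m n : ℕ, n ≤ m → ‖(calA A m n).comp (P n)‖ ≤ a m n)
    -- (D2) : `‖(𝒜_{m,n}|_{F n})⁻¹ Q m‖ ≤ b m n`
    (hD2 : ∀ m n : ℕ, n ≤ m → ‖B m n‖ ≤ b m n)
    -- the perturbations `f k` vanish at `0` and are Lipschitz with constant `L k`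
    (f : ℕ → X → X) (L : ℕ → ℝ) (hL0 : ∀ k, 0 ≤ L k) (hf0 : ∀ k, f k 0 = 0)
    (hLip : ∀ (k : ℕ) (u v : X), ‖f k u - f k v‖ ≤ L k * ‖u - v‖)
    -- `α = sup_{m>n} (1/a_{m,n}) ∑_{k=n}^{m-1} a_{m,k+1} a_{k,n} Lip(f k) < ∞`
    (α : ℝ)
    (hα : IsLUB {r : ℝ | ∃ m n : ℕ, n < m ∧
      r = (∑ k ∈ Finset.Ico n m, a m (k + 1) * (a k n * L k)) / a m n} α)
    -- `β = sup_n ∑_{k=n}^{∞} b_{k+1,n} a_{k,n} Lip(f k) < ∞`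
    (β : ℝ)
    (hsum : ∀ n : ℕ, Summable fun j : ℕ => b (n + j + 1) n * (a (n + j) n * L (n + j)))
    (hβ : IsLUB {r : ℝ | ∃ n : ℕ,
      r = ∑' j : ℕ, b (n + j + 1) n * (a (n + j) n * L (n + j))} β)
    -- `2α + max {2β, √β} < 1`
    (hcond : 2 * α + max (2 * β) (Real.sqrt β) < 1)
    :
    ∃ φ : ∀ n : ℕ, LinearMap.range (P n : X →ₗ[ℝ] X) → LinearMap.ker (P n : X →ₗ[ℝ] X),
      (((∀ n, φ n 0 = 0) ∧
      ∀ (n : ℕ) (ξ ξ' : LinearMap.range (P n : X →ₗ[ℝ] X)),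
        ‖(φ n ξ : X) - (φ n ξ' : X)‖ ≤ ‖(ξ : X) - (ξ' : X)‖) ∧
      (∀ (n : ℕ) (x : ∀ m : ℕ, LinearMap.range (P n : X →ₗ[ℝ] X) → LinearMap.range (P m : X →ₗ[ℝ] X)),
        ((∀ m : ℕ, n ≤ m → x m 0 = 0) ∧
          (∃ C : ℝ, ∀ m : ℕ, n ≤ m → ∀ ξ : LinearMap.range (P n : X →ₗ[ℝ] X),
            ‖(x m ξ : X)‖ ≤ C * (a m n * ‖(ξ : X)‖)) ∧
          (∀ m : ℕ, n ≤ m → ∀ ξ : LinearMap.range (P n : X →ₗ[ℝ] X),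
            (x m ξ : X) = calA A m n (ξ : X) +
              ∑ k ∈ Finset.Ico n m,
                calA A m (k + 1) (P (k + 1) (f k ((x k ξ : X) + (φ k (x k ξ) : X)))))) →
        ∀ ξ : LinearMap.range (P n : X →ₗ[ℝ] X),
          HasSum
            (fun j : ℕ => B (n + j + 1) n (f (n + j)
          ((x (n + j) ξ : X) + (φ (n + j) (x (n + j) ξ) : X))))
            (-(φ n ξ : X)))) ∧
      (∀ ψ : ∀ n : ℕ, LinearMap.range (P n : X →ₗ[ℝ] X) → LinearMap.ker (P n : X →ₗ[ℝ] X),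
        (((∀ n, ψ n 0 = 0) ∧
      ∀ (n : ℕ) (ξ ξ' : LinearMap.range (P n : X →ₗ[ℝ] X)),
        ‖(ψ n ξ : X) - (ψ n ξ' : X)‖ ≤ ‖(ξ : X) - (ξ' : X)‖) ∧
        (∀ (n : ℕ) (x : ∀ m : ℕ, LinearMap.range (P n : X →ₗ[ℝ] X) → LinearMap.range (P m : X →ₗ[ℝ] X)),
        ((∀ m : ℕ, n ≤ m → x m 0 = 0) ∧
          (∃ C : ℝ, ∀ m : ℕ, n ≤ m → ∀ ξ : LinearMap.range (P n : X →ₗ[ℝ] X),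
            ‖(x m ξ : X)‖ ≤ C * (a m n * ‖(ξ : X)‖)) ∧
          (∀ m : ℕ, n ≤ m → ∀ ξ : LinearMap.range (P n : X →ₗ[ℝ] X),
            (x m ξ : X) = calA A m n (ξ : X) +
              ∑ k ∈ Finset.Ico n m,
                calA A m (k + 1) (P (k + 1) (f k ((x k ξ : X) + (ψ k (x k ξ) : X)))))) →
        ∀ ξ : LinearMap.range (P n : X →ₗ[ℝ] X),
          HasSum
            (fun j : ℕ => B (n + j + 1) n (f (n + j)
          ((x (n + j) ξ : X) + (ψ (n + j) (x (n + j) ξ) : X))))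
            (-(ψ n ξ : X)))) → ψ = φ) :=
  exists_unique_phi_general A P B a b ha hproj hS1 hBF hD1 hD2 f L hL0 hf0 hLip α hα β hsum hβ hcond
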